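/- If ρ is a fixed point state of a quantum channel M, then the support of ρ is an invariant subspace for M; conversely, every nonzero invariant subspace S of M contains the support of some fixed point state of M. -/

import Mathlib

open Matrix
open scoped ComplexOrder

noncomputable section

abbrev Mat (d : ℕ) := Matrix (Fin d) (Fin d) ℂ

/-- `K` is a Kraus representation of the linear map `Φ`. -/
def IsKrausRep {d : ℕ} (Φ : Mat d →ₗ[ℂ] Mat d) {n : ℕ} (K : Fin n → Mat d) : Prop :=
  (∀ A, Φ A = ∑ i, K i * A * (K i)ᴴ) ∧ ∑ i, (K i)ᴴ * K i = 1

/-- A quantum channel: completely positive trace-preserving map, i.e. admitting a Kraus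
representation with the normalization condition. -/
def IsCPTP {d : ℕ} (Φ : Mat d →ₗ[ℂ] Mat d) : Prop :=
  ∃ (n : ℕ) (K : Fin n → Mat d), IsKrausRep Φ K

/-- A density matrix: positive semidefinite with unit trace. -/
def IsDensity {d : ℕ} (ρ : Mat d) : Prop := ρ.PosSemidef ∧ ρ.trace = 1

/-- Ergodicity: the channel has a unique fixed point density matrix. -/
def IsErgodic {d : ℕ} (Φ : Mat d →ₗ[ℂ] Mat d) : Prop :=
  ∃! ρ : Mat d, IsDensity ρ ∧ Φ ρ = ρ

/-- The support of an operator, viewed as a subspace of `ℂ^d`. -/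
def supp {d : ℕ} (ρ : Mat d) : Submodule ℂ (Fin d → ℂ) := LinearMap.range ρ.mulVecLin

/-- The trace norm `‖A‖₁ = Tr √(A†A)`. -/
def traceNorm {d : ℕ} (A : Mat d) : ℝ :=
  (((Matrix.posSemidef_conjTranspose_mul_self A).isHermitian.eigenvectorUnitary.1 *
    diagonal (((↑) : ℝ → ℂ) ∘ (√·) ∘ (Matrix.posSemidef_conjTranspose_mul_self A).isHermitian.eigenvalues) *
    (star (Matrix.posSemidef_conjTranspose_mul_self A).isHermitian.eigenvectorUnitary :
      Matrix (Fin d) (Fin d) ℂ)).trace).re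

/-- Mixing: iterates of the channel converge in trace norm to a unique state. -/
def IsMixing {d : ℕ} (Φ : Mat d →ₗ[ℂ] Mat d) : Prop :=
  ∃ ρs : Mat d, IsDensity ρs ∧ ∀ ρ : Mat d, IsDensity ρ →
    Filter.Tendsto (fun k : ℕ => traceNorm ((Φ ^ k) ρ - ρs)) Filter.atTop (nhds 0)

/-- A subspace `S` is invariant for a channel if every Kraus operator (of any Kraus
representation) maps `S` into itself. -/
def IsInvariantSubspace {d : ℕ} (Φ : Mat d →ₗ[ℂ] Mat d) (S : Submodule ℂ (Fin d → ℂ)) : Prop :=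
  ∀ (n : ℕ) (K : Fin n → Mat d), IsKrausRep Φ K → ∀ i, ∀ x ∈ S, (K i).mulVec x ∈ S

/-! If `ρ = ∑ Kᵢ ρ Kᵢ†` and `ρ z = 0`, then `0 = z† ρ z = ∑ (Kᵢ† z)† ρ (Kᵢ† z)` is a sum of
nonnegative terms, so every `Kᵢ†` preserves `ker ρ` and hence every `Kᵢ` preserves `range ρ = (ker ρ)ᗮ`.
Conversely, the states supported in an invariant subspace `S ≠ 0` form a nonempty compact convex
set that the channel maps into itself, and such a set contains a fixed point of any continuous
linear map preserving it: the Cesàro averages `aₙ` of an orbit satisfy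
`T aₙ - aₙ = (Tⁿ⁺¹ x₀ - x₀) / (n + 1) → 0`, so any cluster point of them is fixed. -/

open Filter Topology

namespace Matrix

variable {n ι 𝕜 : Type*} [RCLike 𝕜]

theorem PosSemidef.apply_mul_apply_le [DecidableEq n] {A : Matrix n n 𝕜} (hA : A.PosSemidef)
    (i j : n) : A i j * A j i ≤ A i i * A j j := by
  have h := (hA.submatrix ![i, j]).det_nonneg
  rw [det_fin_two] at h
  simpa [sub_nonneg] using h

theorem convex_setOf_posSemidef : Convex ℝ {A : Matrix n n 𝕜 | A.PosSemidef} :=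
  fun _ hA _ hB _ _ ha hb _ => (hA.smul ha).add (hB.smul hb)

variable [Fintype n] [Fintype ι]

theorem IsHermitian.mem_range_mulVecLin_iff [DecidableEq n] {A : Matrix n n 𝕜}
    (hA : A.IsHermitian) (x : n → 𝕜) :
    x ∈ LinearMap.range A.mulVecLin ↔ ∀ z, A *ᵥ z = 0 → star z ⬝ᵥ x = 0 := by
  have hrange : LinearMap.range (toEuclideanLin A) = (LinearMap.ker (toEuclideanLin A))ᗮ := by
    rw [← (isSymmetric_toEuclideanLin_iff.mpr hA).orthogonal_range,
      Submodule.orthogonal_orthogonal]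
  have hmem : x ∈ LinearMap.range A.mulVecLin ↔
      WithLp.toLp 2 x ∈ LinearMap.range (toEuclideanLin A) := by
    constructor
    · rintro ⟨y, rfl⟩
      exact ⟨WithLp.toLp 2 y, rfl⟩
    · rintro ⟨y, hy⟩
      exact ⟨y.ofLp, congrArg WithLp.ofLp hy⟩
  rw [hmem, hrange, Submodule.mem_orthogonal]
  constructor
  · intro h z hz
    have := h (WithLp.toLp 2 z) (congrArg (WithLp.toLp 2) hz)
    rwa [EuclideanSpace.inner_eq_star_dotProduct, dotProduct_comm] at this
  · intro h u hu
    rw [EuclideanSpace.inner_eq_star_dotProduct, dotProduct_comm]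
    exact h u.ofLp (congrArg WithLp.ofLp hu)

theorem star_dotProduct_mul_mul_conjTranspose_mulVec (K A : Matrix n n 𝕜) (z : n → 𝕜) :
    star z ⬝ᵥ (K * A * Kᴴ) *ᵥ z = star (Kᴴ *ᵥ z) ⬝ᵥ A *ᵥ (Kᴴ *ᵥ z) := by
  rw [← mulVec_mulVec, ← mulVec_mulVec, dotProduct_mulVec, star_mulVec,
    conjTranspose_conjTranspose]

namespace PosSemidef

variable {ρ : Matrix n n 𝕜} {K : ι → Matrix n n 𝕜}

theorem mulVec_conjTranspose_mulVec_eq_zero (hρ : ρ.PosSemidef)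
    (hfix : ∑ i, K i * ρ * (K i)ᴴ = ρ) {z : n → 𝕜} (hz : ρ *ᵥ z = 0) (i : ι) :
    ρ *ᵥ ((K i)ᴴ *ᵥ z) = 0 := by
  have hsum : ∑ j, star ((K j)ᴴ *ᵥ z) ⬝ᵥ ρ *ᵥ ((K j)ᴴ *ᵥ z) = 0 := by
    simp_rw [← star_dotProduct_mul_mul_conjTranspose_mulVec, ← dotProduct_sum, ← sum_mulVec,
      hfix, hz, dotProduct_zero]
  have hterm := (Finset.sum_eq_zero_iff_of_nonneg fun j _ => hρ.dotProduct_mulVec_nonneg _).mp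
    hsum i (Finset.mem_univ i)
  exact (hρ.dotProduct_mulVec_zero_iff _).mp hterm

theorem mulVec_mem_range_mulVecLin [DecidableEq n] (hρ : ρ.PosSemidef)
    (hfix : ∑ i, K i * ρ * (K i)ᴴ = ρ) (i : ι) {x : n → 𝕜}
    (hx : x ∈ LinearMap.range ρ.mulVecLin) : K i *ᵥ x ∈ LinearMap.range ρ.mulVecLin := by
  rw [hρ.1.mem_range_mulVecLin_iff] at hx ⊢
  intro z hz
  rw [dotProduct_mulVec, ← conjTranspose_conjTranspose (K i), ← star_mulVec]
  exact hx _ (hρ.mulVec_conjTranspose_mulVec_eq_zero hfix hz i)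

theorem apply_le_trace {A : Matrix n n 𝕜} (hA : A.PosSemidef) (i : n) : A i i ≤ A.trace :=
  Finset.single_le_sum (f := fun j => A j j) (fun _ _ => hA.diag_nonneg) (Finset.mem_univ i)

end PosSemidef

theorem isClosed_setOf_posSemidef : IsClosed {A : Matrix n n 𝕜 | A.PosSemidef} := by
  simp only [posSemidef_iff_dotProduct_mulVec, Set.ofPred_and, Set.ofPred_forall]
  refine (isClosed_eq continuous_id.matrix_conjTranspose continuous_id).inter
    (isClosed_iInter fun x => isClosed_le continuous_const ?_)
  exact continuous_const.dotProduct (continuous_id.matrix_mulVec continuous_const)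

end Matrix

theorem Convex.exists_fixedPoint_of_isCompact {E : Type*} [AddCommGroup E] [Module ℝ E]
    [TopologicalSpace E] [IsTopologicalAddGroup E] [ContinuousSMul ℝ E] [T2Space E]
    (T : E →ₗ[ℝ] E) (hT : Continuous T) {C : Set E} (hconv : Convex ℝ C)
    (hcpt : IsCompact C) (hne : C.Nonempty) (hmaps : Set.MapsTo T C C) : ∃ x ∈ C, T x = x := by
  obtain ⟨x₀, hx₀⟩ := hne
  let ε : ℕ → ℝ := fun N => ((N + 1 : ℕ) : ℝ)⁻¹
  let avg : ℕ → E := fun N => ε N • ∑ k ∈ Finset.range (N + 1), T^[k] x₀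
  have hiter : ∀ k, T^[k] x₀ ∈ C := fun k => hmaps.iterate k hx₀
  have havg : ∀ N, avg N ∈ C := by
    intro N
    simp only [avg, Finset.smul_sum]
    refine hconv.sum_mem (fun _ _ => by positivity) ?_ fun k _ => hiter k
    simp [ε, mul_inv_cancel₀ (by positivity : (N : ℝ) + 1 ≠ 0)]
  have hdefect : ∀ N, T (avg N) - avg N = ε N • T^[N + 1] x₀ - ε N • x₀ := by
    intro N
    rw [map_smul, map_sum, ← smul_sub, ← smul_sub, ← Finset.sum_sub_distrib]
    simp only [← Function.iterate_succ_apply' T]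
    rw [Finset.sum_range_sub (fun k => T^[k] x₀), Function.iterate_zero_apply]
  have hε : Tendsto ε atTop (𝓝 0) :=
    tendsto_inv_atTop_zero.comp (tendsto_natCast_atTop_atTop.comp (tendsto_add_atTop_nat 1))
  have hdefect_lim : Tendsto (fun N => T (avg N) - avg N) atTop (𝓝 0) := by
    simp only [hdefect]
    simpa using ((hcpt.isVonNBounded ℝ).smul_tendsto_zero
      (Eventually.of_forall fun N => hiter (N + 1)) hε).sub (hε.smul_const x₀)
  obtain ⟨x, hxC, hx⟩ := hcpt.exists_mapClusterPt (f := atTop) (u := avg)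
    (tendsto_principal.mpr (Eventually.of_forall havg))
  have hdefect_clusterPt : MapClusterPt (T x - x) atTop (fun N => T (avg N) - avg N) :=
    hx.tendsto_comp ((hT.sub continuous_id).tendsto x)
  have hfixed : T x - x = 0 :=
    t2_iff_nhds.mp ‹_› (hdefect_clusterPt.clusterPt.mono hdefect_lim)
  exact ⟨x, hxC, sub_eq_zero.mp hfixed⟩

variable {d : ℕ}

theorem supp_le_iff {ρ : Mat d} {S : Submodule ℂ (Fin d → ℂ)} :
    supp ρ ≤ S ↔ ∀ y, ρ *ᵥ y ∈ S :=
  ⟨fun h y => h ⟨y, rfl⟩, fun h _ ⟨y, hy⟩ => hy ▸ h y⟩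

theorem isClosed_setOf_supp_le (S : Submodule ℂ (Fin d → ℂ)) :
    IsClosed {ρ : Mat d | supp ρ ≤ S} := by
  simp only [supp_le_iff, Set.ofPred_forall]
  exact isClosed_iInter fun y =>
    S.closed_of_finiteDimensional.preimage (continuous_id.matrix_mulVec continuous_const)

theorem convex_setOf_supp_le (S : Submodule ℂ (Fin d → ℂ)) :
    Convex ℝ {ρ : Mat d | supp ρ ≤ S} := by
  intro ρ hρ σ hσ a b _ _ _
  simp only [Set.mem_ofPred_eq, supp_le_iff, add_mulVec, smul_mulVec] at hρ hσ ⊢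
  exact fun y => S.add_mem (S.smul_of_tower_mem a (hρ y)) (S.smul_of_tower_mem b (hσ y))

theorem supp_smul_vecMulVec_le {v : Fin d → ℂ} {S : Submodule ℂ (Fin d → ℂ)}
    (hv : v ∈ S) (c : ℂ) (w : Fin d → ℂ) : supp (c • vecMulVec v w) ≤ S :=
  supp_le_iff.mpr fun y => by
    rw [smul_mulVec, vecMulVec_mulVec, op_smul_eq_smul]
    exact S.smul_mem c (S.smul_mem (w ⬝ᵥ y) hv)

theorem IsDensity.norm_apply_le_one {ρ : Mat d} (hρ : IsDensity ρ) (i j : Fin d) :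
    ‖ρ i j‖ ≤ 1 := by
  have hdiag : ∀ k, ρ k k ≤ 1 := fun k => hρ.2 ▸ hρ.1.apply_le_trace k
  have h : ρ i j * ρ j i ≤ 1 := (hρ.1.apply_mul_apply_le i j).trans
    (mul_le_one₀ (hdiag i) hρ.1.diag_nonneg (hdiag j))
  rw [← hρ.1.1.apply j i, RCLike.star_def, Complex.mul_conj'] at h
  exact (sq_le_one_iff₀ (norm_nonneg _)).mp (by exact_mod_cast h)

theorem isClosed_setOf_isDensity : IsClosed {ρ : Mat d | IsDensity ρ} :=
  isClosed_setOf_posSemidef.inter (isClosed_eq continuous_id.matrix_trace continuous_const)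

theorem isCompact_setOf_isDensity : IsCompact {ρ : Mat d | IsDensity ρ} :=
  (isCompact_univ_pi fun _ => isCompact_univ_pi fun _ => isCompact_closedBall (0 : ℂ) 1)
    |>.of_isClosed_subset isClosed_setOf_isDensity
      fun _ hρ i _ j _ => mem_closedBall_zero_iff.mpr (hρ.norm_apply_le_one i j)

theorem convex_setOf_isDensity : Convex ℝ {ρ : Mat d | IsDensity ρ} := by
  refine convex_setOf_posSemidef.inter fun ρ hρ σ hσ a b _ _ hab => ?_
  change ρ.trace = 1 at hρ
  change σ.trace = 1 at hσ
  change (a • ρ + b • σ).trace = 1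
  rw [trace_add, trace_smul, trace_smul, hρ, hσ, ← add_smul, hab, one_smul]

theorem isDensity_smul_vecMulVec_self_star {v : Fin d → ℂ} (hv : v ≠ 0) :
    IsDensity ((v ⬝ᵥ star v)⁻¹ • vecMulVec v (star v)) := by
  have hpos : 0 < v ⬝ᵥ star v := dotProduct_self_star_pos_iff.mpr hv
  refine ⟨(posSemidef_vecMulVec_self_star v).smul (inv_pos.mpr hpos).le, ?_⟩
  rw [trace_smul, trace_vecMulVec, smul_eq_mul, inv_mul_cancel₀ hpos.ne']

namespace IsKrausRep

variable {Φ : Mat d →ₗ[ℂ] Mat d} {n : ℕ} {K : Fin n → Mat d}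

theorem trace_map (hK : IsKrausRep Φ K) (A : Mat d) : (Φ A).trace = A.trace := by
  simp_rw [hK.1, trace_sum, trace_mul_cycle (K _), ← trace_sum, ← Finset.sum_mul, hK.2, one_mul]

theorem posSemidef_map (hK : IsKrausRep Φ K) {A : Mat d} (hA : A.PosSemidef) :
    (Φ A).PosSemidef :=
  hK.1 A ▸ posSemidef_sum _ fun i _ => hA.mul_mul_conjTranspose_same (K i)

theorem isDensity_map (hK : IsKrausRep Φ K) {ρ : Mat d} (hρ : IsDensity ρ) :
    IsDensity (Φ ρ) :=
  ⟨hK.posSemidef_map hρ.1, (hK.trace_map ρ).trans hρ.2⟩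

theorem supp_map_le (hK : IsKrausRep Φ K) {S : Submodule ℂ (Fin d → ℂ)}
    (hS : ∀ i, ∀ x ∈ S, K i *ᵥ x ∈ S) {A : Mat d} (hA : supp A ≤ S) :
    supp (Φ A) ≤ S := by
  rw [supp_le_iff] at hA ⊢
  intro y
  rw [hK.1, sum_mulVec]
  refine S.sum_mem fun i _ => ?_
  rw [← mulVec_mulVec, ← mulVec_mulVec]
  exact hS i _ (hA _)

end IsKrausRep

/-- The support of a fixed point state is an invariant subspace; conversely every nonzero
invariant subspace contains the support of some fixed point state. -/
theorem fixed_points_and_invariant_subspaces {d : ℕ} (Φ : Mat d →ₗ[ℂ] Mat d) (hΦ : IsCPTP Φ) :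
    (∀ ρ : Mat d, IsDensity ρ → Φ ρ = ρ → IsInvariantSubspace Φ (supp ρ)) ∧
    (∀ S : Submodule ℂ (Fin d → ℂ), IsInvariantSubspace Φ S → S ≠ ⊥ →
      ∃ ρ : Mat d, IsDensity ρ ∧ Φ ρ = ρ ∧ supp ρ ≤ S) := by
  refine ⟨fun ρ hρ hfix n K hK i x hx => ?_, fun S hS hS0 => ?_⟩
  · exact hρ.1.mulVec_mem_range_mulVecLin (by rw [← hK.1, hfix]) i hx
  · obtain ⟨n, K, hK⟩ := hΦ
    obtain ⟨v, hvS, hv0⟩ := Submodule.exists_mem_ne_zero_of_ne_bot hS0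
    obtain ⟨ρ, ⟨hρ, hρS⟩, hfix⟩ := Convex.exists_fixedPoint_of_isCompact
      (Φ.restrictScalars ℝ) Φ.continuous_of_finiteDimensional
      (C := {ρ | IsDensity ρ ∧ supp ρ ≤ S})
      (convex_setOf_isDensity.inter (convex_setOf_supp_le S))
      (isCompact_setOf_isDensity.inter_right (isClosed_setOf_supp_le S))
      ⟨_, isDensity_smul_vecMulVec_self_star hv0, supp_smul_vecMulVec_le hvS _ _⟩
      fun ρ hρ => ⟨hK.isDensity_map hρ.1, hK.supp_map_le (hS n K hK) hρ.2⟩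
    exact ⟨ρ, hρ, hfix, hρS⟩
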